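/- Vanishing of a strongly-signed twistor coordinate forces non-coindependence: let k, m, n be positive integers with k + m ≤ n, let I ⊆ {1,…,n} with |I| = m, and let M be a collection of k-element subsets of {1,…,n}. Suppose there is a sign s ∈ {+1,−1} such that ε(J,I) = s for every J ∈ M with J ∩ I = ∅ (this is the content of the twistor ⟪I⟫ having a strong sign on the positroid cell with bases M). Let C be a totally nonnegative k×n real matrix with ⟨J⟩_C = 0 for every k-element subset J ∉ M. If there exists Z ∈ Mat^{>0}_{n,k+m} with ⟪I⟫_{C,Z} = 0, then ⟨J⟩_C = 0 for every k-element subset J ⊆ {1,…,n}∖I; in other words, I is not coindependent for C. -/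

import Mathlib

open Finset

/-- The `k × k` minor `⟨J⟩_C` of a `k × n` matrix `C` on the columns indexed by `J`,
taken in increasing order (junk value `0` if `J.card ≠ k`). -/
noncomputable def colMinor {k n : ℕ} (C : Matrix (Fin k) (Fin n) ℝ)
    (J : Finset (Fin n)) : ℝ :=
  if h : J.card = k then (C.submatrix id ⇑(J.orderEmbOfFin h)).det else 0

/-- The `p × p` minor of an `n × p` matrix `Z` on the rows indexed by `S`,
taken in increasing order (junk value `0` if `S.card ≠ p`). -/
noncomputable def rowMinor {n p : ℕ} (Z : Matrix (Fin n) (Fin p) ℝ)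
    (S : Finset (Fin n)) : ℝ :=
  if h : S.card = p then (Z.submatrix ⇑(S.orderEmbOfFin h) id).det else 0

/-- The twistor coordinate `⟪I⟫_{C,Z}`. -/
noncomputable def twistor {k m n : ℕ} (C : Matrix (Fin k) (Fin n) ℝ)
    (Z : Matrix (Fin n) (Fin (k + m)) ℝ) (I : Finset (Fin n)) : ℝ :=
  if h : I.card = m then
    ((Matrix.fromRows (C * Z) (Z.submatrix ⇑(I.orderEmbOfFin h) id)).submatrix
      ⇑finSumFinEquiv.symm id).det
  else 0

/-- `ε(J, I)`: the sign of the permutation sorting into increasing order the list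
consisting of the elements of `J` in increasing order followed by the elements of `I`
in increasing order. -/
noncomputable def interleavingSign {n : ℕ} (J I : Finset (Fin n)) : ℝ :=
  (-1 : ℝ) ^ ((J ×ˢ I).filter fun p => p.2 < p.1).card

/-!
Let `E_I` be the `m × n` matrix whose rows are the unit vectors `e_i`, `i ∈ I`, and `(C; E_I)`
the matrix `augment C I hI` obtained by stacking `C` on top of it, so that
`⟪I⟫_{C,Z} = det ((C; E_I) Z)`. By Cauchy–Binet this is `∑_S ⟨S⟩_{(C;E_I)} ⟨S⟩_Z` over the
`(k+m)`-subsets `S`. The minor `⟨S⟩_{(C;E_I)}` vanishes unless `I ⊆ S`, and then it is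
`ε(S∖I, I) ⟨S∖I⟩_C`, the sign coming from sorting the columns `S∖I` followed by `I`. Under the
strong-sign hypothesis every summand multiplied by `s` is nonnegative, so a vanishing twistor
kills each summand; the one for `S = J ∪ I` is `±⟨J⟩_C` times a positive minor of `Z`.
-/

def inversions {q : ℕ} {α : Type*} [LinearOrder α] (g : Fin q → α) : Finset (Fin q × Fin q) :=
  univ.filter fun p => p.1 < p.2 ∧ g p.2 < g p.1

theorem inversions_strictMono_comp {q : ℕ} {α β : Type*} [LinearOrder α] [LinearOrder β]
    {h : α → β} (hh : StrictMono h) (g : Fin q → α) : inversions (h ∘ g) = inversions g := by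
  simp [inversions, hh.lt_iff_lt]

theorem sign_eq_neg_one_pow_card_inversions {q : ℕ} (σ : Equiv.Perm (Fin q)) :
    (Equiv.Perm.sign σ : ℝ) = (-1) ^ #(inversions σ) := by
  have hunits : Equiv.Perm.sign σ = (-1) ^ #(inversions σ) := by
    rw [Equiv.Perm.sign_eq_prod_prod_Iio, inversions, card_filter, ← prod_pow_eq_pow_sum,
      ← univ_product_univ, prod_product_right]
    refine prod_congr rfl fun j _ => ?_
    rw [← prod_subset (subset_univ (Iio j)) fun _ _ hi => by simp_all]
    refine prod_congr rfl fun i hi => ?_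
    have hij : i < j := mem_Iio.1 hi
    by_cases h : σ i < σ j
    · simp [h, hij, h.not_gt]
    · simp [h, hij, lt_of_le_of_ne (not_lt.1 h) (σ.injective.ne hij.ne).symm]
  rw [hunits]
  push_cast
  rfl

theorem comp_sort_eq_orderEmbOfFin {q n : ℕ} {g : Fin q → Fin n} (hg : Function.Injective g) :
    g ∘ Tuple.sort g =
      (univ.image g).orderEmbOfFin ((card_image_of_injective univ hg).trans (card_fin q)) :=
  orderEmbOfFin_unique _ (fun _ => mem_image_of_mem g (mem_univ _))
    ((Tuple.monotone_sort g).strictMono_of_injective (hg.comp (Tuple.sort g).injective))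

theorem colMinor_image_eq_neg_one_pow_mul_det {q n : ℕ} (A : Matrix (Fin q) (Fin n) ℝ)
    {g : Fin q → Fin n} (hg : Function.Injective g) :
    colMinor A (univ.image g) = (-1) ^ #(inversions g) * (A.submatrix id g).det := by
  have hsort := comp_sort_eq_orderEmbOfFin hg
  have hinv : inversions g = inversions (Tuple.sort g).symm := by
    conv_lhs => rw [show g = (g ∘ Tuple.sort g) ∘ (Tuple.sort g).symm by ext; simp, hsort]
    exact inversions_strictMono_comp (OrderEmbedding.strictMono _) _
  rw [colMinor, dif_pos ((card_image_of_injective univ hg).trans (card_fin q)), ← hsort,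
    hinv, ← sign_eq_neg_one_pow_card_inversions, Equiv.Perm.sign_symm, ← Matrix.det_permute']
  rfl

theorem det_mul_eq_sum_prod_mul_det_submatrix {p n : ℕ} (A : Matrix (Fin p) (Fin n) ℝ)
    (Z : Matrix (Fin n) (Fin p) ℝ) :
    (A * Z).det = ∑ f : Fin p → Fin n, (∏ i, A i (f i)) * (Z.submatrix f id).det := by
  have hrows : (A * Z).det = Matrix.detRowAlternating fun i => ∑ j, A i j • Z j := by
    congr 1
    ext i t
    simp [Matrix.mul_apply, Finset.sum_apply]
  rw [hrows, ← AlternatingMap.coe_multilinearMap, MultilinearMap.map_sum]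
  refine sum_congr rfl fun f _ => ?_
  rw [MultilinearMap.map_smul_univ]
  rfl

theorem sum_injective_with_image_eq_sum_perm {p n : ℕ} {S : Finset (Fin n)} (hS : S.card = p)
    (T : (Fin p → Fin n) → ℝ) :
    ∑ f : Fin p → Fin n with Function.Injective f ∧ univ.image f = S, T f =
      ∑ σ : Equiv.Perm (Fin p), T (S.orderEmbOfFin hS ∘ σ) := by
  symm
  refine sum_bij (fun σ _ => S.orderEmbOfFin hS ∘ σ) (fun σ _ => ?_)
    (fun σ _ τ _ h => Equiv.ext fun x => (S.orderEmbOfFin hS).injective (congrFun h x))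
    (fun f hf => ?_) fun _ _ => rfl
  · refine mem_filter.2 ⟨mem_univ _, (S.orderEmbOfFin hS).injective.comp σ.injective, ?_⟩
    rw [← image_image, image_univ_equiv, image_orderEmbOfFin_univ]
  · obtain ⟨hinj, rfl⟩ := (mem_filter.1 hf).2
    refine ⟨(Tuple.sort f).symm, mem_univ _, ?_⟩
    rw [← comp_sort_eq_orderEmbOfFin hinj]
    ext
    simp

theorem det_mul_eq_sum_colMinor_mul_rowMinor {p n : ℕ} (A : Matrix (Fin p) (Fin n) ℝ)
    (Z : Matrix (Fin n) (Fin p) ℝ) :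
    (A * Z).det = ∑ S ∈ powersetCard p univ, colMinor A S * rowMinor Z S := by
  have hinj : ∀ f : Fin p → Fin n, (∏ i, A i (f i)) * (Z.submatrix f id).det ≠ 0 →
      Function.Injective f := by
    intro f hf
    by_contra hninj
    obtain ⟨i, j, hfij, hij⟩ := Function.not_injective_iff.1 hninj
    exact hf (by rw [Matrix.det_zero_of_row_eq hij (by ext; simp [hfij]), mul_zero])
  rw [det_mul_eq_sum_prod_mul_det_submatrix, ← sum_filter_of_ne fun f _ hf => hinj f hf,
    ← sum_fiberwise_of_maps_to (g := fun f => univ.image f) (t := powersetCard p univ)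
      fun f hf => mem_powersetCard.2 ⟨subset_univ _,
        (card_image_of_injective univ (mem_filter.1 hf).2).trans (card_fin p)⟩]
  refine sum_congr rfl fun S hS => ?_
  have hcard : S.card = p := (mem_powersetCard.1 hS).2
  rw [filter_filter, sum_injective_with_image_eq_sum_perm hcard, colMinor, rowMinor, dif_pos hcard,
    dif_pos hcard, ← Matrix.det_transpose, Matrix.det_apply', sum_mul]
  refine sum_congr rfl fun σ _ => ?_
  rw [show Z.submatrix (S.orderEmbOfFin hcard ∘ σ) id
      = (Z.submatrix (S.orderEmbOfFin hcard) id).submatrix σ id from rfl, Matrix.det_permute]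
  simp only [Matrix.transpose_apply, Matrix.submatrix_apply, id, Function.comp_apply]
  ring

section Append

variable {k m n : ℕ} {J I : Finset (Fin n)} (hJ : J.card = k) (hI : I.card = m)

theorem injective_append_orderEmbOfFin (hJI : Disjoint J I) :
    Function.Injective (Fin.append (J.orderEmbOfFin hJ) (I.orderEmbOfFin hI)) :=
  Fin.append_injective_iff.2 ⟨(J.orderEmbOfFin hJ).injective, (I.orderEmbOfFin hI).injective,
    fun a b h => disjoint_left.1 hJI (J.orderEmbOfFin_mem hJ a) (h ▸ I.orderEmbOfFin_mem hI b)⟩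

theorem image_append_orderEmbOfFin :
    univ.image (Fin.append (J.orderEmbOfFin hJ) (I.orderEmbOfFin hI)) = J ∪ I := by
  ext x
  simp only [mem_image, mem_univ, true_and, mem_union, ← finSumFinEquiv.exists_congr_right,
    Sum.exists]
  simp [← Set.mem_range (f := J.orderEmbOfFin hJ), ← Set.mem_range (f := I.orderEmbOfFin hI)]

theorem card_inversions_append_orderEmbOfFin (hJI : Disjoint J I) :
    #(inversions (Fin.append (J.orderEmbOfFin hJ) (I.orderEmbOfFin hI))) =
      #((J ×ˢ I).filter fun p => p.2 < p.1) := by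
  set g := Fin.append (J.orderEmbOfFin hJ) (I.orderEmbOfFin hI)
  have hg : Function.Injective g := injective_append_orderEmbOfFin hJ hI hJI
  refine card_nbij (fun p => (g p.1, g p.2)) ?_
    (fun p _ q _ h => Prod.ext (hg (Prod.mk.inj h).1) (hg (Prod.mk.inj h).2)) ?_
  · rintro ⟨x, y⟩ hxy
    induction x using Fin.addCases <;> induction y using Fin.addCases <;> simp_all [g, inversions]
      <;> simp only [Fin.lt_def, Fin.val_castAdd, Fin.val_natAdd] at hxy <;> omega
  · rintro ⟨x, y⟩ hxy
    simp only [coe_filter, mem_product, Set.mem_ofPred_eq] at hxy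
    obtain ⟨⟨hx, hy⟩, hyx⟩ := hxy
    obtain ⟨a, rfl⟩ : x ∈ Set.range (J.orderEmbOfFin hJ) := by rwa [range_orderEmbOfFin]
    obtain ⟨b, rfl⟩ : y ∈ Set.range (I.orderEmbOfFin hI) := by rwa [range_orderEmbOfFin]
    refine ⟨(Fin.castAdd m a, Fin.natAdd k b), ?_, by simp [g]⟩
    simp only [inversions, coe_filter, mem_univ, true_and, Set.mem_ofPred_eq, g, Fin.append_left,
      Fin.append_right, Fin.lt_def, Fin.val_castAdd, Fin.val_natAdd]
    omega

end Append

section Augment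

variable {k m n : ℕ} (C : Matrix (Fin k) (Fin n) ℝ)

noncomputable def augment (I : Finset (Fin n)) (hI : I.card = m) : Matrix (Fin (k + m)) (Fin n) ℝ :=
  (Matrix.fromRows C ((1 : Matrix (Fin n) (Fin n) ℝ).submatrix (I.orderEmbOfFin hI) id)).submatrix
    finSumFinEquiv.symm id

theorem twistor_eq_det_augment_mul (Z : Matrix (Fin n) (Fin (k + m)) ℝ) {I : Finset (Fin n)}
    (hI : I.card = m) :
    twistor C Z I = (augment C I hI * Z).det := by
  have h := Matrix.submatrix_mul (Matrix.fromRows C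
    ((1 : Matrix (Fin n) (Fin n) ℝ).submatrix (I.orderEmbOfFin hI) id)) Z finSumFinEquiv.symm id id
    Function.bijective_id
  rw [Matrix.submatrix_id_id] at h
  rw [twistor, dif_pos hI, augment, ← h, Matrix.fromRows_mul]
  congr
  ext
  simp [Matrix.mul_apply, Matrix.one_apply]

theorem colMinor_augment_eq_zero_of_not_subset {I S : Finset (Fin n)} (hI : I.card = m)
    (hS : S.card = k + m) (hIS : ¬ I ⊆ S) :
    colMinor (augment C I hI) S = 0 := by
  obtain ⟨i, hiI, hiS⟩ := not_subset.1 hIS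
  obtain ⟨b, rfl⟩ : i ∈ Set.range (I.orderEmbOfFin hI) := by rwa [range_orderEmbOfFin]
  rw [colMinor, dif_pos hS]
  refine Matrix.det_eq_zero_of_row_eq_zero (finSumFinEquiv (Sum.inr b)) fun j => ?_
  have hne : I.orderEmbOfFin hI b ≠ S.orderEmbOfFin hS j :=
    fun h => hiS (h ▸ S.orderEmbOfFin_mem hS j)
  simp [augment, hne]

theorem det_augment_submatrix_append {J I : Finset (Fin n)} (hJ : J.card = k) (hI : I.card = m)
    (hJI : Disjoint J I) :
    ((augment C I hI).submatrix id (Fin.append (J.orderEmbOfFin hJ) (I.orderEmbOfFin hI))).det =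
      colMinor C J := by
  have hne : ∀ a b, I.orderEmbOfFin hI b ≠ J.orderEmbOfFin hJ a := fun a b h =>
    disjoint_left.1 hJI (J.orderEmbOfFin_mem hJ a) (h ▸ I.orderEmbOfFin_mem hI b)
  have hblocks : ((augment C I hI).submatrix id
      (Fin.append (J.orderEmbOfFin hJ) (I.orderEmbOfFin hI))).submatrix finSumFinEquiv
        finSumFinEquiv =
      Matrix.fromBlocks (C.submatrix id (J.orderEmbOfFin hJ)) (C.submatrix id (I.orderEmbOfFin hI))
        0 1 := by
    ext (a | b) (a' | b') <;> simp [augment, Matrix.one_apply, hne]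
  rw [← Matrix.det_submatrix_equiv_self finSumFinEquiv, hblocks, Matrix.det_fromBlocks_zero₂₁,
    Matrix.det_one, mul_one, colMinor, dif_pos hJ]

theorem colMinor_augment_union {J I : Finset (Fin n)} (hJ : J.card = k) (hI : I.card = m)
    (hJI : Disjoint J I) :
    colMinor (augment C I hI) (J ∪ I) = interleavingSign J I * colMinor C J := by
  rw [← image_append_orderEmbOfFin hJ hI, colMinor_image_eq_neg_one_pow_mul_det _
    (injective_append_orderEmbOfFin hJ hI hJI), card_inversions_append_orderEmbOfFin hJ hI hJI,
    det_augment_submatrix_append C hJ hI hJI, interleavingSign]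

end Augment

theorem mul_colMinor_augment_nonneg_of_strong_sign {k m n : ℕ} {I : Finset (Fin n)}
    (hI : I.card = m) {M : Set (Finset (Fin n))} {s : ℝ} (hs : s = 1 ∨ s = -1)
    (hsign : ∀ J ∈ M, Disjoint J I → interleavingSign J I = s) {C : Matrix (Fin k) (Fin n) ℝ}
    (hC : ∀ J : Finset (Fin n), J.card = k → 0 ≤ colMinor C J)
    (hCM : ∀ J : Finset (Fin n), J.card = k → J ∉ M → colMinor C J = 0)
    {S : Finset (Fin n)} (hS : S.card = k + m) :
    0 ≤ s * colMinor (augment C I hI) S := by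
  by_cases hIS : I ⊆ S
  · have hJ : (S \ I).card = k := by rw [card_sdiff_of_subset hIS, hS, hI]; omega
    rw [← sdiff_union_of_subset hIS, colMinor_augment_union C hJ hI sdiff_disjoint]
    by_cases hM : S \ I ∈ M
    · have hss : s * s = 1 := by rcases hs with rfl | rfl <;> norm_num
      rw [hsign _ hM sdiff_disjoint, ← mul_assoc, hss, one_mul]
      exact hC _ hJ
    · rw [hCM _ hJ hM, mul_zero, mul_zero]
  · rw [colMinor_augment_eq_zero_of_not_subset C hI hS hIS, mul_zero]

theorem twistor_strong_sign_vanishing_general (k m n : ℕ) (I : Finset (Fin n)) (hI : I.card = m)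
    (M : Set (Finset (Fin n)))
    (s : ℝ) (hs : s = 1 ∨ s = -1)
    (hsign : ∀ J ∈ M, Disjoint J I → interleavingSign J I = s)
    (C : Matrix (Fin k) (Fin n) ℝ)
    (hC : ∀ J : Finset (Fin n), J.card = k → 0 ≤ colMinor C J)
    (hCM : ∀ J : Finset (Fin n), J.card = k → J ∉ M → colMinor C J = 0)
    (hZ : ∃ Z : Matrix (Fin n) (Fin (k + m)) ℝ,
      (∀ S : Finset (Fin n), S.card = k + m → 0 < rowMinor Z S) ∧ twistor C Z I = 0) :
    ∀ J : Finset (Fin n), J.card = k → Disjoint J I → colMinor C J = 0 := by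
  intro J hJ hJI
  obtain ⟨Z, hZpos, hZI⟩ := hZ
  have hterm_nonneg : ∀ S ∈ powersetCard (k + m) univ,
      0 ≤ s * colMinor (augment C I hI) S * rowMinor Z S := fun S hS =>
    have hcard := (mem_powersetCard.1 hS).2
    mul_nonneg (mul_colMinor_augment_nonneg_of_strong_sign hI hs hsign hC hCM hcard)
      (hZpos S hcard).le
  have hsum : ∑ S ∈ powersetCard (k + m) univ,
      s * colMinor (augment C I hI) S * rowMinor Z S = 0 := by
    simp_rw [mul_assoc, ← mul_sum, ← det_mul_eq_sum_colMinor_mul_rowMinor,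
      ← twistor_eq_det_augment_mul, hZI, mul_zero]
  have hJIcard : (J ∪ I).card = k + m := by rw [card_union_of_disjoint hJI, hJ, hI]
  have hterm := (sum_eq_zero_iff_of_nonneg hterm_nonneg).1 hsum (J ∪ I)
    (mem_powersetCard.2 ⟨subset_univ _, hJIcard⟩)
  have hs0 : s ≠ 0 := by rcases hs with rfl | rfl <;> norm_num
  have hε : interleavingSign J I ≠ 0 := pow_ne_zero _ (by norm_num)
  rw [colMinor_augment_union C hJ hI hJI] at hterm
  simpa [hs0, hε, (hZpos _ hJIcard).ne'] using hterm

/-- If the twistor `⟪I⟫` has a strong sign on the positroid cell with bases `M`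
(i.e. `ε(J, I)` is a constant sign `s` over all `J ∈ M` disjoint from `I`), `C` is a
totally nonnegative matrix whose `k × k` minors vanish outside `M`, and `⟪I⟫_{C,Z} = 0`
for some totally positive `Z`, then every `k × k` minor of `C` on columns disjoint
from `I` vanishes; i.e. `I` is not coindependent for `C`. -/
theorem twistor_strong_sign_vanishing (k m n : ℕ) (hk : 0 < k) (hm : 0 < m)
    (hn : k + m ≤ n) (I : Finset (Fin n)) (hI : I.card = m)
    (M : Set (Finset (Fin n))) (hM : ∀ J ∈ M, J.card = k)
    (s : ℝ) (hs : s = 1 ∨ s = -1)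
    (hsign : ∀ J ∈ M, Disjoint J I → interleavingSign J I = s)
    (C : Matrix (Fin k) (Fin n) ℝ)
    (hC : ∀ J : Finset (Fin n), J.card = k → 0 ≤ colMinor C J)
    (hCM : ∀ J : Finset (Fin n), J.card = k → J ∉ M → colMinor C J = 0)
    (hZ : ∃ Z : Matrix (Fin n) (Fin (k + m)) ℝ,
      (∀ S : Finset (Fin n), S.card = k + m → 0 < rowMinor Z S) ∧ twistor C Z I = 0) :
    ∀ J : Finset (Fin n), J.card = k → Disjoint J I → colMinor C J = 0 :=
  twistor_strong_sign_vanishing_general k m n I hI M s hs hsign C hC hCM hZ
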